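/- Let f(t) = t - t^{p+1} + O(t^{2p+1}) be holomorphic near 0, let Φ(t) = t^{-p}, Ψ_k the inverse branch of Φ mapping into the sector S_k, and v := Φ ∘ f ∘ Ψ_k the conjugated map near infinity. Then v(w) = w + p + O(|w|^{-1/p}) as |w| → ∞ in the region Π(a) = {x + iy : y² > 1/a² - 2x/a} for a > 0 small. -/

import Mathlib

/-! Put `w = t / f t - 1`. The expansion of `f` gives `w = t ^ p + O(t ^ (2p))`, and
`f t ^ (-p) - t ^ (-p) - p = t ^ (-p) * (((1 + w) ^ p - 1 - p w) + p (w - t ^ p))`.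
Both summands in the bracket are `O(t ^ (2p))`, so the left side is `O(t ^ p) = O(t)` on a
punctured neighbourhood of `0`, and a petal `Π_k(a)` lies in any such neighbourhood once `a` is
small. -/

open Filter Topology Asymptotics

/-- The petal `Π_k(a) = {r e^{iθ} : 0 < r^p < a(1 + cos(pθ)), |2kπ/p - θ| < π/p}`. -/
def petal (p : ℕ) (k : ℤ) (a : ℝ) : Set ℂ :=
  {z | ∃ r θ : ℝ, 0 < r ∧ z = (r : ℂ) * Complex.exp (θ * Complex.I) ∧
    r ^ p < a * (1 + Real.cos (p * θ)) ∧ |2 * k * Real.pi / p - θ| < Real.pi / p}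

section
variable {𝕜 : Type*} [NormedField 𝕜]

theorem isBigO_pow_pow_of_le {m n : ℕ} (h : m ≤ n) :
    (fun x : 𝕜 => x ^ n) =O[𝓝 0] fun x => x ^ m := by
  rcases h.eq_or_lt with rfl | hlt
  · exact isBigO_refl _ _
  · exact (isLittleO_pow_pow hlt).isBigO

theorem isBigO_one_add_pow_sub_one_sub_mul (n : ℕ) :
    (fun w : 𝕜 => (1 + w) ^ n - 1 - n * w) =O[𝓝 0] fun w => w ^ 2 := by
  induction n with
  | zero => simpa using isBigO_zero _ _
  | succ n ih =>
    have hbdd : (fun w : 𝕜 => 1 + w) =O[𝓝 0] fun _ => (1 : 𝕜) :=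
      (tendsto_const_nhds.add tendsto_id).isBigO_one 𝕜
    have hprod : (fun w : 𝕜 => (1 + w) * ((1 + w) ^ n - 1 - n * w)) =O[𝓝 0] fun w => w ^ 2 := by
      simpa only [one_mul] using hbdd.mul ih
    refine (hprod.add ((isBigO_refl _ _).const_mul_left (n : 𝕜))).congr_left fun w => ?_
    push_cast
    ring

variable {f : 𝕜 → 𝕜} {p : ℕ}

theorem isEquivalent_id_of_isBigO_sub_add_pow (hp : 1 ≤ p)
    (hfexp : (fun t => f t - t + t ^ (p + 1)) =O[𝓝 0] fun t => t ^ (2 * p + 1)) :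
    f ~[𝓝 0] fun t => t := by
  have hcubic : (fun t => f t - t + t ^ (p + 1)) =o[𝓝 0] fun t => t :=
    hfexp.trans_isLittleO (isLittleO_pow_id (by omega))
  exact (hcubic.sub (isLittleO_pow_id (n := p + 1) (by omega))).congr_left fun t => by simp

theorem isBigO_div_sub_one_sub_pow (hp : 1 ≤ p)
    (hfexp : (fun t => f t - t + t ^ (p + 1)) =O[𝓝 0] fun t => t ^ (2 * p + 1)) :
    (fun t => t / f t - 1 - t ^ p) =O[𝓝[≠] 0] fun t => t ^ (2 * p) := by
  have hid : (fun t => t) =O[𝓝[≠] 0] f :=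
    ((isEquivalent_id_of_isBigO_sub_add_pow hp hfexp).symm.isBigO).mono nhdsWithin_le_nhds
  have hne : ∀ᶠ t in 𝓝[≠] (0 : 𝕜), t ≠ 0 := self_mem_nhdsWithin
  have hinv : (fun t => (f t)⁻¹) =O[𝓝[≠] 0] fun t => t⁻¹ :=
    hid.inv_rev (hne.mono fun t ht h0 => absurd h0 ht)
  have hfne : ∀ᶠ t in 𝓝[≠] (0 : 𝕜), f t ≠ 0 :=
    (hid.eq_zero_imp.and hne).mono fun t ⟨himp, ht⟩ h0 => ht (himp h0)
  have hbdd : (fun t : 𝕜 => 1 + t ^ p) =O[𝓝 0] fun _ => (1 : 𝕜) :=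
    ((continuous_const.add (continuous_pow p)).tendsto' 0 _ rfl).isBigO_one 𝕜
  have hnum : (fun t => t ^ (2 * p + 1) - (1 + t ^ p) * (f t - t + t ^ (p + 1)))
      =O[𝓝 0] fun t => t ^ (2 * p + 1) :=
    (isBigO_refl _ _).sub (by simpa only [one_mul] using hbdd.mul hfexp)
  refine ((hnum.mono nhdsWithin_le_nhds).mul hinv).congr' ?_ ?_
  · filter_upwards [hfne] with t ht
    field_simp
    ring
  · filter_upwards [hne] with t ht
    field_simp
    ring

theorem isBigO_zpow_neg_sub_zpow_neg_sub (hp : 1 ≤ p)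
    (hfexp : (fun t => f t - t + t ^ (p + 1)) =O[𝓝 0] fun t => t ^ (2 * p + 1)) :
    (fun t => f t ^ (-(p : ℤ)) - t ^ (-(p : ℤ)) - p) =O[𝓝[≠] 0] fun t => t ^ p := by
  set w : 𝕜 → 𝕜 := fun t => t / f t - 1 with hw_def
  have hne : ∀ᶠ t in 𝓝[≠] (0 : 𝕜), t ≠ 0 := self_mem_nhdsWithin
  have hw_sub : (fun t => w t - t ^ p) =O[𝓝[≠] 0] fun t => t ^ (2 * p) :=
    isBigO_div_sub_one_sub_pow hp hfexp
  have hw : w =O[𝓝[≠] 0] fun t => t ^ p :=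
    ((hw_sub.trans ((isBigO_pow_pow_of_le (by omega)).mono nhdsWithin_le_nhds)).add
      (isBigO_refl _ _)).congr_left fun t => sub_add_cancel _ _
  have hw_lim : Tendsto w (𝓝[≠] 0) (𝓝 0) :=
    hw.trans_tendsto (((continuous_pow p).tendsto' 0 0 (zero_pow (by omega))).mono_left
      nhdsWithin_le_nhds)
  have hbracket : (fun t => ((1 + w t) ^ p - 1 - p * w t) + p * (w t - t ^ p))
      =O[𝓝[≠] 0] fun t => t ^ (2 * p) := by
    refine IsBigO.add ?_ (hw_sub.const_mul_left _)
    refine ((isBigO_one_add_pow_sub_one_sub_mul p).comp_tendsto hw_lim).trans ?_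
    show (fun t => w t ^ 2) =O[_] _
    simpa only [← pow_mul, mul_comm p] using hw.pow 2
  refine ((isBigO_refl (fun t : 𝕜 => t ^ (-(p : ℤ))) _).mul hbracket).congr' ?_ ?_
  · filter_upwards [hne] with t ht
    simp only [hw_def, zpow_neg, zpow_natCast]
    field_simp
    ring
  · filter_upwards [hne] with t ht
    simp only [zpow_neg, zpow_natCast]
    field_simp
    ring

end

theorem ne_zero_and_norm_pow_lt_of_mem_petal {p : ℕ} {k : ℤ} {a : ℝ} {t : ℂ}
    (ht : t ∈ petal p k a) : t ≠ 0 ∧ ‖t‖ ^ p < 2 * a := by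
  obtain ⟨r, θ, hr, rfl, hrp, -⟩ := ht
  have hnorm : ‖(r : ℂ) * Complex.exp (θ * Complex.I)‖ = r := by
    rw [norm_mul, Complex.norm_exp_ofReal_mul_I, mul_one, Complex.norm_real,
      Real.norm_of_nonneg hr.le]
  refine ⟨by rw [← norm_pos_iff, hnorm]; exact hr, ?_⟩
  rw [hnorm]
  have := pow_pos hr p
  nlinarith [Real.cos_le_one (p * θ), Real.neg_one_le_cos (p * θ)]

theorem stmt_4_general (f : ℂ → ℂ) (p : ℕ) (k : ℤ) (hp : 1 ≤ p)
    (hfexp : (fun t => f t - t + t ^ (p + 1)) =O[𝓝 0] fun t => t ^ (2 * p + 1)) :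
    ∃ a : ℝ, 0 < a ∧ ∃ C : ℝ, 0 < C ∧
      ∀ t ∈ petal p k a,
        ‖(f t) ^ (-(p : ℤ)) - t ^ (-(p : ℤ)) - p‖ ≤ C * ‖t‖ := by
  have hbigO : (fun t => f t ^ (-(p : ℤ)) - t ^ (-(p : ℤ)) - p) =O[𝓝[≠] 0] fun t => t := by
    simpa only [pow_one] using (isBigO_zpow_neg_sub_zpow_neg_sub hp hfexp).trans
      ((isBigO_pow_pow_of_le hp).mono nhdsWithin_le_nhds)
  obtain ⟨C, hC⟩ := hbigO.bound
  obtain ⟨ε, hε, hball⟩ := Metric.eventually_nhds_iff.1 (eventually_nhdsWithin_iff.1 hC)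
  refine ⟨ε ^ p / 2, by positivity, max C 1, by positivity, fun t ht => ?_⟩
  obtain ⟨ht0, htp⟩ := ne_zero_and_norm_pow_lt_of_mem_petal ht
  have htε : dist t 0 < ε := by
    rw [dist_zero_right]
    exact lt_of_pow_lt_pow_left₀ p hε.le (by linarith)
  calc _ ≤ C * ‖t‖ := hball htε ht0
    _ ≤ max C 1 * ‖t‖ := by gcongr; exact le_max_left _ _

/-- For `f t = t - t^(p+1) + O(t^(2p+1))`, in the coordinate
`w = Φ(t) = t^(-p)` the conjugated map `v = Φ ∘ f ∘ Ψ_k` satisfies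
`v w = w + p + O(|w|^(-1/p))` on the image `Π(a)` of a small petal; equivalently,
for `t` in the petal `Π_k(a)` with `a > 0` small, `(f t)^(-p) = t^(-p) + p + O(|t|)`
(note `|Φ(t)|^(-1/p) = |t|`). -/
theorem stmt_4 (f : ℂ → ℂ) (p : ℕ) (k : ℤ) (hp : 1 ≤ p)
    (hf : AnalyticAt ℂ f 0) (hf0 : f 0 = 0)
    (hfexp : (fun t => f t - t + t ^ (p + 1)) =O[𝓝 0] fun t => t ^ (2 * p + 1)) :
    ∃ a : ℝ, 0 < a ∧ ∃ C : ℝ, 0 < C ∧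
      ∀ t ∈ petal p k a,
        ‖(f t) ^ (-(p : ℤ)) - t ^ (-(p : ℤ)) - p‖ ≤ C * ‖t‖ :=
  stmt_4_general f p k hp hfexp
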